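/- Let σ̃ = {ṽ_0,…,ṽ_k} ⊂ ℝ^n be a k-simplex and ℓ_{ij} symmetric positive numbers with | ‖ṽ_i − ṽ_j‖ − ℓ_{ij} | ≤ C_0 L(σ̃) for all i < j, where C_0 = η Θ(σ̃)²/4, 0 ≤ η ≤ 1. Then there exists a Euclidean k-simplex σ = {v_0,…,v_k} with ‖v_i − v_j‖ = ℓ_{ij} for all i ≠ j, and it satisfies σ_k(P) ≥ (1 − η) σ_k(P̃) and Θ(σ) ≥ (4/(5√k)) (1 − η) Θ(σ̃). -/

import Mathlib

/-!
Write `Q_b(x) = ‖∑ⱼ xⱼ • (uⱼ - u_b)‖²` for a simplex `u`: it is the quadratic form of the matrix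
`distGram d b` built from the squared edge lengths `d`, and altitudes and the smallest singular
value of the edge matrix are infima of `√Q_b(x)` over suitable `x` with `x_b = 0`.
Replacing `d` by `ℓ` moves each entry by at most `(27/8) C₀ L²`, hence the form by at most
`(27/8) C₀ L² k ∑ xⱼ²`; since every altitude of `σ̃` is at least `k Θ L`, the form of `σ̃` is at
least `k Θ² L² ∑ xⱼ²`, so the form of `ℓ` is at least `1 - η` times that of `σ̃`. It is therefore
positive semidefinite, `ℓ` is realised by a simplex `σ`, and every `√Q_b` of `σ` is at least
`1 - η` times that of `σ̃`. This bounds `σ_k(P)` and the altitudes of `σ`, while its longest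
edge is at most `(1 + C₀) L ≤ 5 L / 4`.
-/

noncomputable section

open Metric Matrix

/-- The altitude of vertex `i` of the simplex with vertices `v`: the distance
from `v i` to the affine hull of the opposite facet. -/
def altitude {m k : ℕ} (v : Fin (k + 1) → EuclideanSpace ℝ (Fin m)) (i : Fin (k + 1)) : ℝ :=
  Metric.infDist (v i) (affineSpan ℝ (v '' {j | j ≠ i}) : Set (EuclideanSpace ℝ (Fin m)))

/-- The longest edge length of the simplex with vertices `v`. -/
def longestEdge {m k : ℕ} (v : Fin (k + 1) → EuclideanSpace ℝ (Fin m)) : ℝ :=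
  sSup {d : ℝ | ∃ i j, d = dist (v i) (v j)}

/-- The thickness of the simplex with vertices `v`. -/
def thickness {m k : ℕ} (v : Fin (k + 1) → EuclideanSpace ℝ (Fin m)) : ℝ :=
  if k = 0 then 1 else (sInf (Set.range (altitude v))) / (k * longestEdge v)

/-- The `m × k` matrix whose `j`-th column is `v (j+1) - v 0`. -/
def edgeMat {m k : ℕ} (v : Fin (k + 1) → EuclideanSpace ℝ (Fin m)) :
    Matrix (Fin m) (Fin k) ℝ :=
  Matrix.of fun i j => (v j.succ - v 0) i

/-- The smallest singular value of a matrix: the infimum of `‖P x‖` over unit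
vectors `x` (Euclidean norms). -/
def smallestSing {m k : ℕ} (P : Matrix (Fin m) (Fin k) ℝ) : ℝ :=
  sInf { r : ℝ | ∃ x : EuclideanSpace ℝ (Fin k), ‖x‖ = 1 ∧
    r = ‖(EuclideanSpace.equiv (Fin m) ℝ).symm (P.mulVec (EuclideanSpace.equiv (Fin k) ℝ x))‖ }

section AffineSpan

variable {ι E : Type*} [Fintype ι] [AddCommGroup E] [Module ℝ E]

theorem mem_affineSpan_image_ne_iff (u : ι → E) {b i : ι} (hbi : b ≠ i) (p : E) :
    p ∈ affineSpan ℝ (u '' {j | j ≠ i}) ↔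
      ∃ x : ι → ℝ, x b = 0 ∧ x i = 1 ∧ u i - ∑ j, x j • (u j - u b) = p := by
  classical
  have hb : b ∈ {j | j ≠ i} := hbi
  rw [← AffineSubspace.vsub_right_mem_direction_iff_mem
      (subset_affineSpan ℝ _ (Set.mem_image_of_mem u hb)),
    direction_affineSpan, vectorSpan_image_eq_span_vsub_set_right_ne ℝ u hb, Set.image_image,
    Finsupp.mem_span_image_iff_linearCombination]
  have key : ∀ x : ι → ℝ, u i - ∑ j, x j • (u j - u b) -ᵥ u b
      = ∑ j, (Pi.single i 1 - x : ι → ℝ) j • (u j -ᵥ u b) := by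
    intro x
    simp only [vsub_eq_sub, Pi.sub_apply, sub_smul, Finset.sum_sub_distrib, Pi.single_apply,
      ite_smul, one_smul, zero_smul, Finset.sum_ite_eq', Finset.mem_univ, if_true]
    abel
  constructor
  · rintro ⟨l, hl, hlp⟩
    rw [Finsupp.mem_supported'] at hl
    refine ⟨Pi.single i 1 - ⇑l, ?_, ?_, ?_⟩
    · simp [hbi, hl b (by simp)]
    · simp [hl i (by simp)]
    · rw [← vsub_left_cancel_iff (p := u b), key, ← hlp, Finsupp.linearCombination_apply,
        Finsupp.sum_fintype _ _ (by simp)]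
      simp
  · rintro ⟨x, hxb, hxi, rfl⟩
    refine ⟨Finsupp.equivFunOnFinite.symm (Pi.single i 1 - x), ?_, ?_⟩
    · rw [Finsupp.mem_supported']
      intro j hj
      simp only [Set.mem_sdiff, Set.mem_ofPred_eq, Set.mem_singleton_iff, not_and_or, not_not] at hj
      rcases hj with rfl | rfl <;> simp [hxb, hxi, hbi]
    · rw [key, Finsupp.linearCombination_apply, Finsupp.sum_fintype _ _ (by simp)]
      simp

end AffineSpan

section Altitude

variable {m k : ℕ}

theorem altitude_le_norm_sum (u : Fin (k + 1) → EuclideanSpace ℝ (Fin m)) {b i : Fin (k + 1)}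
    (hbi : b ≠ i) {x : Fin (k + 1) → ℝ} (hxb : x b = 0) (hxi : x i = 1) :
    altitude u i ≤ ‖∑ j, x j • (u j - u b)‖ := by
  have hmem := (mem_affineSpan_image_ne_iff u hbi _).2 ⟨x, hxb, hxi, rfl⟩
  simpa [altitude, dist_eq_norm] using Metric.infDist_le_dist_of_mem (x := u i) hmem

theorem abs_mul_altitude_le_norm_sum (u : Fin (k + 1) → EuclideanSpace ℝ (Fin m))
    {b i : Fin (k + 1)} (hbi : b ≠ i) {x : Fin (k + 1) → ℝ} (hxb : x b = 0) :
    |x i| * altitude u i ≤ ‖∑ j, x j • (u j - u b)‖ := by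
  rcases eq_or_ne (x i) 0 with hxi | hxi
  · simp [hxi]
  calc |x i| * altitude u i
      ≤ |x i| * ‖∑ j, ((x i)⁻¹ • x) j • (u j - u b)‖ := by
        gcongr
        exact altitude_le_norm_sum u hbi (by simp [hxb]) (by simp [hxi])
    _ = ‖∑ j, x j • (u j - u b)‖ := by
        simp only [Pi.smul_apply, smul_eq_mul, ← smul_smul, ← Finset.smul_sum, norm_smul,
          norm_inv, Real.norm_eq_abs]
        field_simp

theorem mul_altitude_le_altitude {u v : Fin (k + 1) → EuclideanSpace ℝ (Fin m)} (hk : 0 < k)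
    {c : ℝ} (hc : 0 ≤ c)
    (h : ∀ b (x : Fin (k + 1) → ℝ), x b = 0 →
      c * ‖∑ j, x j • (u j - u b)‖ ≤ ‖∑ j, x j • (v j - v b)‖) (i : Fin (k + 1)) :
    c * altitude u i ≤ altitude v i := by
  have : Nontrivial (Fin (k + 1)) := Fin.nontrivial_iff_two_le.2 (by omega)
  obtain ⟨b, hbi⟩ := exists_ne i
  have hne : (affineSpan ℝ (v '' {j | j ≠ i}) : Set (EuclideanSpace ℝ (Fin m))).Nonempty :=
    ⟨v b, subset_affineSpan ℝ _ ⟨b, hbi, rfl⟩⟩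
  refine (Metric.le_infDist hne).2 fun p hp => ?_
  obtain ⟨x, hxb, hxi, rfl⟩ := (mem_affineSpan_image_ne_iff v hbi p).1 hp
  calc c * altitude u i ≤ c * ‖∑ j, x j • (u j - u b)‖ := by
        gcongr
        exact altitude_le_norm_sum u hbi hxb hxi
    _ ≤ dist (v i) (v i - ∑ j, x j • (v j - v b)) := by simpa [dist_eq_norm] using h b x hxb

end Altitude

section Simplex

variable {m k : ℕ}

theorem dist_le_longestEdge (u : Fin (k + 1) → EuclideanSpace ℝ (Fin m)) (i j : Fin (k + 1)) :
    dist (u i) (u j) ≤ longestEdge u := by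
  have hfin : {d : ℝ | ∃ i j, d = dist (u i) (u j)}.Finite :=
    (Set.finite_range fun p : Fin (k + 1) × Fin (k + 1) => dist (u p.1) (u p.2)).subset
      fun _ ⟨i, j, hd⟩ => ⟨(i, j), hd.symm⟩
  exact le_csSup hfin.bddAbove ⟨i, j, rfl⟩

theorem longestEdge_le {u : Fin (k + 1) → EuclideanSpace ℝ (Fin m)} {c : ℝ}
    (h : ∀ i j, dist (u i) (u j) ≤ c) : longestEdge u ≤ c :=
  csSup_le ⟨_, 0, 0, rfl⟩ fun _ ⟨i, j, hd⟩ => hd ▸ h i j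

theorem longestEdge_nonneg (u : Fin (k + 1) → EuclideanSpace ℝ (Fin m)) : 0 ≤ longestEdge u :=
  dist_nonneg.trans (dist_le_longestEdge u 0 0)

theorem sInf_range_altitude_nonneg (u : Fin (k + 1) → EuclideanSpace ℝ (Fin m)) :
    0 ≤ sInf (Set.range (altitude u)) :=
  Real.sInf_nonneg (Set.forall_mem_range.2 fun _ => Metric.infDist_nonneg)

theorem thickness_nonneg (u : Fin (k + 1) → EuclideanSpace ℝ (Fin m)) : 0 ≤ thickness u := by
  unfold thickness
  split_ifs
  · exact zero_le_one
  · exact div_nonneg (sInf_range_altitude_nonneg u) (by positivity [longestEdge_nonneg u])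

theorem mul_longestEdge_mul_thickness_le_altitude (u : Fin (k + 1) → EuclideanSpace ℝ (Fin m))
    (hk : 0 < k) (i : Fin (k + 1)) : k * longestEdge u * thickness u ≤ altitude u i := by
  rw [thickness, if_neg hk.ne']
  rcases eq_or_ne ((k : ℝ) * longestEdge u) 0 with h | h
  · rw [h, div_zero, mul_zero]
    exact Metric.infDist_nonneg
  · rw [mul_div_cancel₀ _ h]
    exact csInf_le (Set.finite_range _).bddBelow ⟨i, rfl⟩

theorem longestEdge_pos_of_thickness_pos {u : Fin (k + 1) → EuclideanSpace ℝ (Fin m)}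
    (hk : 0 < k) (h : 0 < thickness u) : 0 < longestEdge u := by
  refine (longestEdge_nonneg u).lt_of_ne' fun hL => h.ne' ?_
  rw [thickness, if_neg hk.ne', hL, mul_zero, div_zero]

theorem thickness_le_one (u : Fin (k + 1) → EuclideanSpace ℝ (Fin m)) (hk : 0 < k) :
    thickness u ≤ 1 := by
  rcases (thickness_nonneg u).eq_or_lt with h | h
  · rw [← h]; exact zero_le_one
  have hL := longestEdge_pos_of_thickness_pos hk h
  have h1 : (1 : Fin (k + 1)) ≠ 0 := by simp [Fin.ext_iff, hk.ne']
  have halt : altitude u 0 ≤ dist (u 0) (u 1) :=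
    Metric.infDist_le_dist_of_mem (subset_affineSpan ℝ _ ⟨1, h1, rfl⟩)
  have hk1 : (1 : ℝ) ≤ k := by exact_mod_cast hk
  refine le_of_mul_le_mul_left ?_ hL
  calc longestEdge u * thickness u ≤ k * longestEdge u * thickness u := by
        rw [mul_assoc]
        exact le_mul_of_one_le_left (by positivity) hk1
    _ ≤ longestEdge u * 1 := by
        simpa using (mul_longestEdge_mul_thickness_le_altitude u hk 0).trans
          (halt.trans (dist_le_longestEdge u 0 1))

theorem mul_thickness_sq_le_one (u : Fin (k + 1) → EuclideanSpace ℝ (Fin m)) (hk : 0 < k)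
    {η : ℝ} (hη : η ≤ 1) : η * thickness u ^ 2 ≤ 1 :=
  mul_le_one₀ hη (by positivity [thickness_nonneg u])
    (pow_le_one₀ (thickness_nonneg u) (thickness_le_one u hk))

theorem div_mul_thickness_le_thickness {u v : Fin (k + 1) → EuclideanSpace ℝ (Fin m)}
    (hk : 0 < k) {c K : ℝ} (hc : 0 ≤ c) (halt : ∀ i, c * altitude u i ≤ altitude v i)
    (hv : 0 < longestEdge v) (hvu : longestEdge v ≤ K * longestEdge u) :
    c / K * thickness u ≤ thickness v := by
  have hinf : c * sInf (Set.range (altitude u)) ≤ sInf (Set.range (altitude v)) := by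
    refine le_csInf (Set.range_nonempty _) fun _ ⟨i, hi⟩ => hi ▸ ?_
    exact (mul_le_mul_of_nonneg_left (csInf_le (Set.finite_range _).bddBelow ⟨i, rfl⟩) hc).trans
      (halt i)
  rw [thickness, thickness, if_neg hk.ne', if_neg hk.ne', div_mul_div_comm, mul_comm K,
    mul_assoc]
  exact div_le_div₀ (sInf_range_altitude_nonneg v) hinf (by positivity)
    (by rw [mul_comm (longestEdge u)]; gcongr)

end Simplex

section SmallestSing

variable {m k : ℕ}

theorem smallestSing_nonneg (P : Matrix (Fin m) (Fin k) ℝ) : 0 ≤ smallestSing P :=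
  Real.sInf_nonneg fun _ ⟨_, _, hr⟩ => hr ▸ norm_nonneg _

theorem norm_edgeMat_mulVec (u : Fin (k + 1) → EuclideanSpace ℝ (Fin m))
    (y : EuclideanSpace ℝ (Fin k)) :
    ‖(EuclideanSpace.equiv (Fin m) ℝ).symm (edgeMat u *ᵥ EuclideanSpace.equiv (Fin k) ℝ y)‖ =
      ‖∑ j, (Fin.cons 0 y : Fin (k + 1) → ℝ) j • (u j - u 0)‖ := by
  congr 1
  ext r
  simp [Fin.sum_univ_succ, edgeMat, Matrix.mulVec, dotProduct, mul_comm]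

theorem mul_smallestSing_edgeMat_le {u v : Fin (k + 1) → EuclideanSpace ℝ (Fin m)} {c : ℝ}
    (hc : 0 ≤ c)
    (h : ∀ x : Fin (k + 1) → ℝ, x 0 = 0 →
      c * ‖∑ j, x j • (u j - u 0)‖ ≤ ‖∑ j, x j • (v j - v 0)‖) :
    c * smallestSing (edgeMat u) ≤ smallestSing (edgeMat v) := by
  by_cases hne : ∃ y : EuclideanSpace ℝ (Fin k), ‖y‖ = 1
  · obtain ⟨y₀, hy₀⟩ := hne
    refine le_csInf ⟨_, y₀, hy₀, rfl⟩ fun _ ⟨y, hy, hr⟩ => hr ▸ ?_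
    calc c * smallestSing (edgeMat u)
        ≤ c * ‖∑ j, (Fin.cons 0 y : Fin (k + 1) → ℝ) j • (u j - u 0)‖ := by
          gcongr
          rw [← norm_edgeMat_mulVec]
          exact csInf_le ⟨0, fun _ ⟨_, _, hr⟩ => hr ▸ norm_nonneg _⟩ ⟨y, hy, rfl⟩
      _ ≤ _ := by rw [norm_edgeMat_mulVec]; exact h _ rfl
  · simp [smallestSing, not_exists.1 hne]

end SmallestSing

section GramForm

variable {ι : Type*}

/-- For `b = 0` and indices `≥ 1` this is the matrix `G` of the realisability criterion:
`D` is the edge-length table of a Euclidean simplex iff it is positive semidefinite. -/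
def distGram (D : ι → ι → ℝ) (b : ι) : Matrix ι ι ℝ :=
  Matrix.of fun i j => (D b i ^ 2 + D b j ^ 2 - D i j ^ 2) / 2

theorem distGram_dist {E : Type*} [NormedAddCommGroup E] [InnerProductSpace ℝ E] (u : ι → E)
    (b : ι) : distGram (fun i j => dist (u i) (u j)) b = gram ℝ (fun j => u j - u b) := by
  ext i j
  rw [distGram, Matrix.of_apply, gram_apply,
    real_inner_eq_norm_mul_self_add_norm_mul_self_sub_norm_sub_mul_self_div_two,
    sub_sub_sub_cancel_right, dist_comm (u b), dist_comm (u b), dist_eq_norm, dist_eq_norm,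
    dist_eq_norm]
  ring

theorem norm_sum_smul_sub_sq [Fintype ι] {E : Type*} [NormedAddCommGroup E] [InnerProductSpace ℝ E]
    (u : ι → E) (b : ι) (x : ι → ℝ) :
    ‖∑ j, x j • (u j - u b)‖ ^ 2 = x ⬝ᵥ distGram (fun i j => dist (u i) (u j)) b *ᵥ x := by
  rw [distGram_dist, ← star_trivial x, star_dotProduct_gram_mulVec, star_trivial,
    real_inner_self_eq_norm_sq]

theorem abs_dotProduct_mulVec_le [Fintype ι] {A : Matrix ι ι ℝ} {M : ℝ} (hA : ∀ i j, |A i j| ≤ M)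
    (x : ι → ℝ) : |x ⬝ᵥ A *ᵥ x| ≤ M * (∑ i, |x i|) ^ 2 := by
  calc |x ⬝ᵥ A *ᵥ x| = |∑ i, ∑ j, x i * A i j * x j| := by
        simp only [dotProduct, Matrix.mulVec, Finset.mul_sum, mul_assoc]
    _ ≤ ∑ i, ∑ j, |x i| * M * |x j| := by
        refine (Finset.abs_sum_le_sum_abs _ _).trans (Finset.sum_le_sum fun i _ => ?_)
        refine (Finset.abs_sum_le_sum_abs _ _).trans (Finset.sum_le_sum fun j _ => ?_)
        rw [abs_mul, abs_mul]
        gcongr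
        exact hA i j
    _ = M * (∑ i, |x i|) ^ 2 := by
        rw [sq, Finset.sum_mul_sum, Finset.mul_sum]
        simp only [Finset.mul_sum]
        exact Finset.sum_congr rfl fun i _ => Finset.sum_congr rfl fun j _ => by ring

theorem dotProduct_mulVec_sub_le [Fintype ι] {A A' : Matrix ι ι ℝ} {M : ℝ}
    (h : ∀ i j, |A' i j - A i j| ≤ M) (x : ι → ℝ) :
    x ⬝ᵥ A *ᵥ x - M * (∑ i, |x i|) ^ 2 ≤ x ⬝ᵥ A' *ᵥ x := by
  have := abs_le.1 (abs_dotProduct_mulVec_le (A := A' - A) h x)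
  rw [Matrix.sub_mulVec, dotProduct_sub] at this
  linarith [this.1]

theorem abs_sq_sub_sq_le {a b ε L : ℝ} (h : |a - b| ≤ ε) (hb : |b| ≤ L) :
    |a ^ 2 - b ^ 2| ≤ ε * (2 * L + ε) := by
  have hab : |a + b| ≤ 2 * L + ε := by
    calc |a + b| = |(a - b) + 2 * b| := by ring_nf
      _ ≤ |a - b| + 2 * |b| := by
          refine (abs_add_le _ _).trans ?_
          rw [abs_mul, abs_two]
      _ ≤ 2 * L + ε := by linarith
  rw [sq_sub_sq, abs_mul, mul_comm]
  exact mul_le_mul h hab (abs_nonneg _) ((abs_nonneg _).trans h)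

theorem abs_distGram_sub_le {D D' : ι → ι → ℝ} {ε L : ℝ} (hD : ∀ i j, |D i j| ≤ L)
    (h : ∀ i j, |D' i j - D i j| ≤ ε) (b i j : ι) :
    |distGram D' b i j - distGram D b i j| ≤ 3 / 2 * (ε * (2 * L + ε)) := by
  have h1 := abs_le.1 (abs_sq_sub_sq_le (h b i) (hD b i))
  have h2 := abs_le.1 (abs_sq_sub_sq_le (h b j) (hD b j))
  have h3 := abs_le.1 (abs_sq_sub_sq_le (h i j) (hD i j))
  simp only [distGram, Matrix.of_apply]
  rw [abs_le]
  constructor <;> linarith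

end GramForm

section Coordinates

variable {k : ℕ} {x : Fin (k + 1) → ℝ} {b : Fin (k + 1)}

theorem sq_sum_abs_le_mul_sum_sq (hxb : x b = 0) : (∑ i, |x i|) ^ 2 ≤ k * ∑ i, x i ^ 2 := by
  rw [← Finset.sum_erase (f := fun i => |x i|) (a := b) _ (by simp [hxb]),
    ← Finset.sum_erase (f := fun i => x i ^ 2) (a := b) _ (by simp [hxb])]
  simpa [Finset.card_erase_of_mem] using
    sq_sum_le_card_mul_sum_sq (s := Finset.univ.erase b) (f := fun i => |x i|)

theorem sum_sq_le_mul_sq_of_abs_le (hxb : x b = 0) {i : Fin (k + 1)} (hi : ∀ j, |x j| ≤ |x i|) :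
    ∑ j, x j ^ 2 ≤ k * x i ^ 2 := by
  rw [← Finset.sum_erase (f := fun i => x i ^ 2) (a := b) _ (by simp [hxb])]
  simpa [Finset.card_erase_of_mem] using
    Finset.sum_le_card_nsmul (Finset.univ.erase b) (fun j => x j ^ 2) (x i ^ 2)
      fun j _ => sq_le_sq.2 (hi j)

end Coordinates

theorem sq_mul_sum_sq_le_mul_norm_sum_sq {m k : ℕ} (u : Fin (k + 1) → EuclideanSpace ℝ (Fin m))
    {a : ℝ} (ha : 0 ≤ a) (halt : ∀ i, a ≤ altitude u i) {b : Fin (k + 1)}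
    {x : Fin (k + 1) → ℝ} (hxb : x b = 0) :
    a ^ 2 * ∑ j, x j ^ 2 ≤ k * ‖∑ j, x j • (u j - u b)‖ ^ 2 := by
  obtain ⟨i, -, hi⟩ := Finset.exists_max_image Finset.univ (fun j => |x j|) Finset.univ_nonempty
  have hsum := sum_sq_le_mul_sq_of_abs_le hxb fun j => hi j (Finset.mem_univ j)
  rcases eq_or_ne b i with rfl | hbi
  · have : ∑ j, x j ^ 2 = 0 := le_antisymm (by simpa [hxb] using hsum) (by positivity)
    rw [this, mul_zero]
    positivity
  have hnorm : |x i| * a ≤ ‖∑ j, x j • (u j - u b)‖ :=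
    (mul_le_mul_of_nonneg_left (halt i) (abs_nonneg _)).trans
      (abs_mul_altitude_le_norm_sum u hbi hxb)
  calc a ^ 2 * ∑ j, x j ^ 2 ≤ a ^ 2 * (k * x i ^ 2) := by gcongr
    _ = k * (|x i| * a) ^ 2 := by rw [mul_pow, sq_abs]; ring
    _ ≤ k * ‖∑ j, x j • (u j - u b)‖ ^ 2 := by gcongr

section Realization

open scoped MatrixOrder in
theorem exists_gram_eq_of_posSemidef {ι E : Type*} [Fintype ι] [NormedAddCommGroup E]
    [InnerProductSpace ℝ E] {G : Matrix ι ι ℝ} (hG : G.PosSemidef) {e : ι → E}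
    (he : Orthonormal ℝ e) : ∃ w : ι → E, gram ℝ w = G := by
  classical
  obtain ⟨B, rfl⟩ := CStarAlgebra.nonneg_iff_eq_star_mul_self.mp hG.nonneg
  refine ⟨fun j => ∑ r, B r j • e r, ?_⟩
  ext i j
  rw [gram_apply, he.inner_sum, Matrix.mul_apply]
  rfl

theorem posSemidef_submatrix_succ {k : ℕ} {A : Matrix (Fin (k + 1)) (Fin (k + 1)) ℝ}
    (hA : A.IsHermitian) (h : ∀ x, x 0 = 0 → 0 ≤ x ⬝ᵥ A *ᵥ x) :
    (A.submatrix Fin.succ Fin.succ).PosSemidef := by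
  refine .of_dotProduct_mulVec_nonneg (hA.submatrix _) fun y => ?_
  refine (h (Fin.cons 0 y) rfl).trans_eq ?_
  simp [dotProduct, Matrix.mulVec, Fin.sum_univ_succ]

theorem exists_dist_eq_of_posSemidef {k n : ℕ} (hkn : k ≤ n) {D : Fin (k + 1) → Fin (k + 1) → ℝ}
    (hsymm : ∀ i j, D i j = D j i) (hdiag : ∀ i, D i i = 0) (hnn : ∀ i j, 0 ≤ D i j)
    (hG : ((distGram D 0).submatrix Fin.succ Fin.succ).PosSemidef) :
    ∃ v : Fin (k + 1) → EuclideanSpace ℝ (Fin n), ∀ i j, dist (v i) (v j) = D i j := by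
  have he : Orthonormal ℝ fun j : Fin k => EuclideanSpace.single (Fin.castLE hkn j) (1 : ℝ) :=
    EuclideanSpace.orthonormal_single.comp _ (Fin.castLE_injective hkn)
  obtain ⟨w, hw⟩ := exists_gram_eq_of_posSemidef hG he
  set v : Fin (k + 1) → EuclideanSpace ℝ (Fin n) := Fin.cons 0 w
  have hv : gram ℝ v = distGram D 0 := by
    ext i j
    refine Fin.cases ?_ (fun i => ?_) i <;> refine Fin.cases ?_ (fun j => ?_) j
    · simp [v, distGram, hdiag]
    · simp [v, distGram, hdiag]
    · simp [v, distGram, hdiag, hsymm i.succ 0]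
    · simpa [v] using congrFun (congrFun hw i) j
  refine ⟨v, fun i j => ?_⟩
  have hgram := fun i j => congrFun (congrFun hv i) j
  simp only [gram_apply, distGram, Matrix.of_apply] at hgram
  rw [← Real.sqrt_sq dist_nonneg, ← Real.sqrt_sq (hnn i j), dist_eq_norm, norm_sub_sq_real,
    ← real_inner_self_eq_norm_sq, ← real_inner_self_eq_norm_sq, hgram, hgram, hgram, hdiag,
    hdiag]
  ring_nf

end Realization

theorem le_of_forall_altitude_pos {m k : ℕ} {u : Fin (k + 1) → EuclideanSpace ℝ (Fin m)}
    (h : ∀ i, 0 < altitude u i) : k ≤ m := by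
  have hli : LinearIndependent ℝ fun j : Fin k => u j.succ - u 0 := by
    refine Fintype.linearIndependent_iff.2 fun g hg i => ?_
    have := abs_mul_altitude_le_norm_sum u (Fin.succ_ne_zero i).symm
      (x := Fin.cons 0 g) rfl
    simp only [Fin.sum_univ_succ, Fin.cons_zero, Fin.cons_succ, sub_self, smul_zero, zero_add,
      hg, norm_zero] at this
    exact abs_eq_zero.1 (le_antisymm (nonpos_of_mul_nonpos_left this (h _)) (abs_nonneg _))
  simpa using hli.fintype_card_le_finrank

theorem one_sub_mul_norm_sum_sq_le {n k : ℕ} {u : Fin (k + 1) → EuclideanSpace ℝ (Fin n)}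
    {D : Fin (k + 1) → Fin (k + 1) → ℝ} {η : ℝ} (hk : 0 < k) (hη0 : 0 ≤ η) (hη1 : η ≤ 1)
    (hD : ∀ i j, |D i j - dist (u i) (u j)| ≤ η * thickness u ^ 2 / 4 * longestEdge u)
    {b : Fin (k + 1)} {x : Fin (k + 1) → ℝ} (hxb : x b = 0) :
    (1 - η) * ‖∑ j, x j • (u j - u b)‖ ^ 2 ≤ x ⬝ᵥ distGram D b *ᵥ x := by
  set L := longestEdge u
  set Θ := thickness u
  set N := ‖∑ j, x j • (u j - u b)‖ ^ 2
  set ε := η * Θ ^ 2 / 4 * L with hε_def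
  have hL := longestEdge_nonneg u
  have hΘ0 := thickness_nonneg u
  have hkpos : (0 : ℝ) < k := by exact_mod_cast hk
  have hε : 3 / 2 * (ε * (2 * L + ε)) ≤ η * Θ ^ 2 * L ^ 2 := by
    have hεL : ε ≤ L / 4 := by
      rw [hε_def, ← one_mul (L / 4)]
      nlinarith [mul_thickness_sq_le_one u hk hη1]
    calc 3 / 2 * (ε * (2 * L + ε)) ≤ 3 / 2 * (ε * (2 * L + L / 4)) := by gcongr
      _ = 27 / 32 * (η * Θ ^ 2 * L ^ 2) := by rw [hε_def]; ring
      _ ≤ η * Θ ^ 2 * L ^ 2 := by linarith [show 0 ≤ η * Θ ^ 2 * L ^ 2 by positivity]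
  have hform := dotProduct_mulVec_sub_le (abs_distGram_sub_le
    (fun i j => (abs_of_nonneg dist_nonneg).trans_le (dist_le_longestEdge u i j)) hD b) x
  rw [← norm_sum_smul_sub_sq] at hform
  have hcount := sq_sum_abs_le_mul_sum_sq hxb
  have halt := sq_mul_sum_sq_le_mul_norm_sum_sq u (by positivity)
    (mul_longestEdge_mul_thickness_le_altitude u hk) hxb
  have hpert : 3 / 2 * (ε * (2 * L + ε)) * (∑ i, |x i|) ^ 2 ≤ η * N := by
    refine (mul_le_mul hε hcount (by positivity) (by positivity)).trans ?_
    refine le_of_mul_le_mul_left ?_ hkpos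
    calc (k : ℝ) * (η * Θ ^ 2 * L ^ 2 * (k * ∑ i, x i ^ 2))
        = η * ((k * L * Θ) ^ 2 * ∑ i, x i ^ 2) := by ring
      _ ≤ η * (k * N) := by gcongr
      _ = k * (η * N) := by ring
  linarith

theorem exists_dist_eq_and_mul_norm_sum_le {n k : ℕ} (hkn : k ≤ n)
    {u : Fin (k + 1) → EuclideanSpace ℝ (Fin n)} {D : Fin (k + 1) → Fin (k + 1) → ℝ} {c : ℝ}
    (hc0 : 0 ≤ c) (hc1 : c ≤ 1) (hsymm : ∀ i j, D i j = D j i) (hdiag : ∀ i, D i i = 0)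
    (hnn : ∀ i j, 0 ≤ D i j)
    (hQ : ∀ b x, x b = 0 → c * ‖∑ j, x j • (u j - u b)‖ ^ 2 ≤ x ⬝ᵥ distGram D b *ᵥ x) :
    ∃ v : Fin (k + 1) → EuclideanSpace ℝ (Fin n), (∀ i j, dist (v i) (v j) = D i j) ∧
      ∀ b (x : Fin (k + 1) → ℝ), x b = 0 →
        c * ‖∑ j, x j • (u j - u b)‖ ≤ ‖∑ j, x j • (v j - v b)‖ := by
  have hherm : (distGram D 0).IsHermitian := by
    ext i j
    simp only [Matrix.conjTranspose_apply, distGram, Matrix.of_apply, star_trivial, hsymm j i]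
    ring
  obtain ⟨v, hv⟩ := exists_dist_eq_of_posSemidef hkn hsymm hdiag hnn
    (posSemidef_submatrix_succ hherm fun x hx => (by positivity : (0 : ℝ) ≤ _).trans (hQ 0 x hx))
  refine ⟨v, hv, fun b x hxb => le_of_pow_le_pow_left₀ two_ne_zero (norm_nonneg _) ?_⟩
  rw [norm_sum_smul_sub_sq v, funext₂ hv, mul_pow]
  refine le_trans ?_ (hQ b x hxb)
  gcongr
  nlinarith

theorem exists_simplex_of_abs_sub_dist_le {n k : ℕ}
    {u : Fin (k + 1) → EuclideanSpace ℝ (Fin n)} {D : Fin (k + 1) → Fin (k + 1) → ℝ} {η : ℝ}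
    (hk : 0 < k) (hΘ : 0 < thickness u) (hη0 : 0 ≤ η) (hη1 : η ≤ 1)
    (hsymm : ∀ i j, D i j = D j i) (hdiag : ∀ i, D i i = 0) (hpos : ∀ i j, i ≠ j → 0 < D i j)
    (hD : ∀ i j, |D i j - dist (u i) (u j)| ≤ η * thickness u ^ 2 / 4 * longestEdge u) :
    ∃ v : Fin (k + 1) → EuclideanSpace ℝ (Fin n), (∀ i j, dist (v i) (v j) = D i j) ∧
      (1 - η) * smallestSing (edgeMat u) ≤ smallestSing (edgeMat v) ∧
      4 / 5 * (1 - η) * thickness u ≤ thickness v := by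
  have hL := longestEdge_pos_of_thickness_pos hk hΘ
  have hnn : ∀ i j, 0 ≤ D i j := fun i j =>
    (eq_or_ne i j).elim (fun h => h ▸ (hdiag i).ge) fun h => (hpos i j h).le
  obtain ⟨v, hv, hcmp⟩ := exists_dist_eq_and_mul_norm_sum_le
    (le_of_forall_altitude_pos fun i => (mul_pos (mul_pos (by exact_mod_cast hk) hL) hΘ).trans_le
      (mul_longestEdge_mul_thickness_le_altitude u hk i))
    (sub_nonneg.2 hη1) (by linarith) hsymm hdiag hnn
    (fun b x hxb => one_sub_mul_norm_sum_sq_le hk hη0 hη1 hD hxb)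
  refine ⟨v, hv, mul_smallestSing_edgeMat_le (by linarith) (hcmp 0), ?_⟩
  have hLv : longestEdge v ≤ 5 / 4 * longestEdge u := longestEdge_le fun i j => by
    rw [hv]
    linarith [abs_le.1 (hD i j), dist_le_longestEdge u i j,
      mul_le_mul_of_nonneg_right (mul_thickness_sq_le_one u hk hη1) hL.le]
  have hLv0 : 0 < longestEdge v := by
    have h01 : (0 : Fin (k + 1)) ≠ 1 := by simp [Fin.ext_iff, hk.ne']
    exact (hpos 0 1 h01).trans_le (hv 0 1 ▸ dist_le_longestEdge v 0 1)
  calc 4 / 5 * (1 - η) * thickness u = (1 - η) / (5 / 4) * thickness u := by ring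
    _ ≤ thickness v := div_mul_thickness_le_thickness hk (by linarith)
        (mul_altitude_le_altitude hk (by linarith) hcmp) hLv0 hLv

theorem div_mul_sqrt_natCast_le {a b : ℝ} (ha : 0 ≤ a) (hb : 0 < b) (k : ℕ) :
    a / (b * √k) ≤ a / b := by
  rcases k.eq_zero_or_pos with rfl | hk
  · simpa using div_nonneg ha hb.le
  · exact div_le_div_of_nonneg_left ha hb
      (le_mul_of_one_le_right hb.le (Real.one_le_sqrt.2 (by exact_mod_cast hk)))

/-- **Abstract Euclidean simplex.**  Numbers `ℓ i j` close to the edge lengths of a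
simplex `vt` are realisable as edge lengths of a Euclidean simplex, whose quality
is controlled by that of `vt`. -/
theorem abstract_euclidean_simplex {n k : ℕ}
    (vt : Fin (k + 1) → EuclideanSpace ℝ (Fin n)) (ℓ : Fin (k + 1) → Fin (k + 1) → ℝ)
    (hsymm : ∀ i j, ℓ i j = ℓ j i) (hpos : ∀ i j, i ≠ j → 0 < ℓ i j)
    (C₀ η : ℝ) (hη0 : 0 ≤ η) (hη1 : η ≤ 1) (hC₀ : C₀ = η * thickness vt ^ 2 / 4)
    (hdist : ∀ i j : Fin (k + 1), i < j →
      |dist (vt i) (vt j) - ℓ i j| ≤ C₀ * longestEdge vt) :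
    ∃ v : Fin (k + 1) → EuclideanSpace ℝ (Fin n),
      (∀ i j, i ≠ j → dist (v i) (v j) = ℓ i j) ∧
      smallestSing (edgeMat v) ≥ (1 - η) * smallestSing (edgeMat vt) ∧
      thickness v ≥ 4 / (5 * Real.sqrt k) * (1 - η) * thickness vt := by
  -- `ℓ` is unconstrained on the diagonal
  set ℓ' : Fin (k + 1) → Fin (k + 1) → ℝ := fun i j => if i = j then 0 else ℓ i j
  have herr : ∀ i j, |ℓ' i j - dist (vt i) (vt j)| ≤ C₀ * longestEdge vt := by
    intro i j
    rcases lt_trichotomy i j with h | rfl | h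
    · simpa [ℓ', h.ne, abs_sub_comm] using hdist i j h
    · simpa [ℓ', hC₀] using by positivity [longestEdge_nonneg vt]
    · simpa [ℓ', h.ne', abs_sub_comm, dist_comm, hsymm i j] using hdist j i h
  have hcoef : 4 / (5 * √k) * (1 - η) * thickness vt ≤ 4 / 5 * (1 - η) * thickness vt :=
    mul_le_mul_of_nonneg_right (mul_le_mul_of_nonneg_right
      (div_mul_sqrt_natCast_le (by norm_num) (by norm_num) k) (sub_nonneg.2 hη1))
      (thickness_nonneg vt)
  by_cases hdeg : k = 0 ∨ thickness vt = 0
  · refine ⟨vt, fun i j hij => ?_, ?_, ?_⟩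
    · rcases hdeg with rfl | hΘ
      · exact absurd (Subsingleton.elim (α := Fin 1) i j) hij
      · have h := herr i j
        rw [hC₀, hΘ] at h
        simp [ℓ', hij] at h
        linarith
    · nlinarith [smallestSing_nonneg (edgeMat vt)]
    · nlinarith [thickness_nonneg vt]
  push Not at hdeg
  obtain ⟨v, hv, hσ, hΘ⟩ := exists_simplex_of_abs_sub_dist_le (Nat.pos_of_ne_zero hdeg.1)
    ((thickness_nonneg vt).lt_of_ne' hdeg.2) hη0 hη1
    (fun i j => by simp only [ℓ', eq_comm, hsymm i j]) (by simp [ℓ'])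
    (fun i j h => by simpa [ℓ', h] using hpos i j h) (hC₀ ▸ herr)
  exact ⟨v, fun i j hij => by simp [hv, ℓ', hij], hσ, hcoef.trans hΘ⟩

end
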